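/- Let X = ℝ × 𝕋, let a, b ∈ ℝ with a ≠ 0, and let α be the topological automorphism α(t,z) = (a·t, e^{i·b·t}·z) of X. Let μ_1, μ_2 be probability measures on X and suppose Measure.map ((x,y) ↦ (x + y, x + α(y))) (μ_1 ⊗ μ_2) = Measure.map ((x,y) ↦ (x + y, −(x + α(y)))) (μ_1 ⊗ μ_2). Then there exist x_1, x_2 ∈ X such that the shifted measures λ_j = μ_j * δ_{−x_j} satisfy: if a ≠ 1, then λ_j is concentrated on the closed subgroup K = { (t, ±e^{i·b·t/(a−1)}) : t ∈ ℝ } (λ_j(K) = 1); if a = 1, then λ_j is concentrated on G; and in both cases Measure.map ((x,y) ↦ (x + y, x + α(y))) (λ_1 ⊗ λ_2) = Measure.map ((x,y) ↦ (x + y, −(x + α(y)))) (λ_1 ⊗ λ_2). -/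

import Mathlib

/-!
For `a ≠ 1` the character `β(t, z) = z · e^{-ibt/(a-1)}` satisfies `β ∘ α = β`, so `β(L₁) = β(L₂)`,
and the symmetry of `L₂` given `L₁` forces `2 β(L₂) = 0`, i.e. `β(ξ₁) + β(ξ₂) ∈ {±1}` a.s.
Since `ξ₁, ξ₂` are independent, each `β(ξⱼ)` then lies a.s. in a single coset of `{±1}`, and
shifting by these cosets lands in `K = β⁻¹{±1}`. For `a = 1` the same argument on the real
coordinate makes the real parts of `ξ₁, ξ₂` a.s. equal to constants `c, -c`; then
`L₂ = L₁ + (0, e^{-ibc})` a.s. and the argument on the circle coordinate yields cosets of `{±1}`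
in `𝕋`. In both cases the shifts satisfy `x₁ + α x₂ = 0`, which preserves the symmetry.
-/

open MeasureTheory Complex

noncomputable instance : MeasurableSpace Circle := borel Circle
instance : BorelSpace Circle := ⟨rfl⟩
noncomputable instance : MeasurableSpace (Additive Circle) :=
  inferInstanceAs (MeasurableSpace Circle)

/-- The group `X = ℝ × 𝕋`, with the circle written additively. -/
abbrev XT : Type := ℝ × Additive Circle

/-- The element `−1` of the circle group. -/
def negOneCircle : Circle := ⟨-1, by simp [Submonoid.unitSphere]⟩

/-- The automorphism `α(t,z) = (a·t, e^{i·b·t}·z)` of `ℝ × 𝕋`. -/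
noncomputable def alphaXT (a b : ℝ) : XT → XT :=
  fun x => (a * x.1, Additive.ofMul (Circle.exp (b * x.1)) + x.2)

/-- The two-element subgroup `G = {(0,1), (0,−1)}` of `ℝ × 𝕋`. -/
def setG : Set XT :=
  {x | x.1 = 0 ∧ (x.2.toMul = (1 : Circle) ∨ x.2.toMul = negOneCircle)}

/-- The closed subgroup `K = {(t, ±e^{i·b·t/(a−1)}) : t ∈ ℝ}` of `ℝ × 𝕋`. -/
noncomputable def setK (a b : ℝ) : Set XT :=
  {x | x.2.toMul = Circle.exp (b * x.1 / (a - 1)) ∨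
       x.2.toMul = negOneCircle * Circle.exp (b * x.1 / (a - 1))}

lemma conv_dirac_neg_apply_eq_one {Y : Type*} [AddGroup Y] [MeasurableSpace Y]
    [MeasurableAdd₂ Y] {μ : Measure Y} [IsProbabilityMeasure μ] {s : Set Y}
    (hs : MeasurableSet s) {x : Y} (h : ∀ᵐ y ∂μ, y - x ∈ s) : (μ ∗ Measure.dirac (-x)) s = 1 := by
  have hmap : ∀ᵐ y ∂μ.map (· + -x), y ∈ s :=
    (ae_map_iff (measurable_add_const _).aemeasurable hs).2 (by simpa only [← sub_eq_add_neg])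
  have : IsProbabilityMeasure (μ.map (· + -x)) :=
    Measure.isProbabilityMeasure_map (measurable_add_const _).aemeasurable
  rw [Measure.conv_dirac]
  exact (prob_compl_eq_zero_iff hs).1 (ae_iff.1 hmap)

/-- The law of `(U, V)` lives on the line `v = u + c`, hence so does the law of `(U, -V)`. -/
lemma ae_two_nsmul_eq_zero_of_map_eq {Y : Type*} [AddGroup Y] [MeasurableSpace Y]
    [MeasurableAdd Y] [MeasurableNeg Y] [MeasurableSub₂ Y] [MeasurableSingletonClass Y]
    {Ω : Type*} [MeasurableSpace Ω] {m : Measure Ω} {U V : Ω → Y} (hU : Measurable U)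
    (hV : Measurable V) (c : Y)
    (hUV : ∀ᵐ ω ∂m, V ω = U ω + c)
    (h : m.map (fun ω => (U ω, V ω)) = m.map (fun ω => (U ω, -V ω))) :
    ∀ᵐ ω ∂m, 2 • V ω = 0 := by
  have hD : MeasurableSet {y : Y × Y | y.2 = y.1 + c} :=
    measurableSet_eq_fun measurable_snd (measurable_fst.add_const c)
  have hlaw : ∀ᵐ y ∂m.map (fun ω => (U ω, V ω)), y.2 = y.1 + c :=
    (ae_map_iff (hU.prodMk hV).aemeasurable hD).2 hUV
  rw [h, ae_map_iff (by fun_prop : Measurable fun ω => (U ω, -V ω)).aemeasurable hD] at hlaw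
  filter_upwards [hUV, hlaw] with ω hω hω'
  rw [two_nsmul, ← neg_eq_iff_add_eq_zero, hω', hω]

lemma AddSubgroup.mem_torsionBy_two_iff {Y : Type*} [AddCommGroup Y] {y : Y} :
    y ∈ AddSubgroup.torsionBy Y 2 ↔ 2 • y = 0 :=
  AddSubgroup.torsionBy.nsmul_iff (n := 2)

lemma exists_ae_sub_mem_and_ae_add_mem {Y : Type*} [AddGroup Y] {Ω₁ Ω₂ : Type*}
    [MeasurableSpace Ω₁] [MeasurableSpace Ω₂] {μ₁ : Measure Ω₁} {μ₂ : Measure Ω₂}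
    [NeZero μ₁] [NeZero μ₂] [SFinite μ₂] (S : AddSubgroup Y) {f₁ : Ω₁ → Y} {f₂ : Ω₂ → Y}
    (h : ∀ᵐ p ∂μ₁.prod μ₂, f₁ p.1 + f₂ p.2 ∈ S) :
    ∃ d, (∀ᵐ x ∂μ₁, f₁ x - d ∈ S) ∧ ∀ᵐ y ∂μ₂, d + f₂ y ∈ S := by
  have h' := Measure.ae_ae_of_ae_prod h
  obtain ⟨x₀, hx₀⟩ := h'.exists
  refine ⟨f₁ x₀, ?_, hx₀⟩
  filter_upwards [h'] with x hx
  obtain ⟨y, hxy, hx₀y⟩ := (hx.and hx₀).exists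
  simpa only [add_sub_add_right_eq_sub] using S.sub_mem hxy hx₀y

/-- The conditional law of `ξ₁ + α ξ₂` given `ξ₁ + ξ₂` is symmetric, for independent `ξⱼ ∼ μⱼ`. -/
def HeydeSymmetric {Y : Type*} [Add Y] [Neg Y] [MeasurableSpace Y] (α : Y → Y)
    (μ₁ μ₂ : Measure Y) : Prop :=
  (μ₁.prod μ₂).map (fun p => (p.1 + p.2, p.1 + α p.2)) =
    (μ₁.prod μ₂).map (fun p => (p.1 + p.2, -(p.1 + α p.2)))

namespace HeydeSymmetric

variable {Y : Type*} [AddCommGroup Y] [MeasurableSpace Y] [MeasurableAdd₂ Y] [MeasurableNeg Y]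
  {α : Y →+ Y} {μ₁ μ₂ : Measure Y}

lemma map_of_odd {Z : Type*} [Neg Z] [MeasurableSpace Z] (hα : Measurable α)
    (h : HeydeSymmetric α μ₁ μ₂) {g : Y → Z} (hg : Measurable g) (hodd : ∀ y, g (-y) = -g y) :
    (μ₁.prod μ₂).map (fun p => (g (p.1 + p.2), g (p.1 + α p.2))) =
      (μ₁.prod μ₂).map (fun p => (g (p.1 + p.2), -g (p.1 + α p.2))) := by
  have := congrArg (Measure.map (Prod.map g g)) h
  rw [Measure.map_map (by fun_prop) (by fun_prop), Measure.map_map (by fun_prop) (by fun_prop)]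
    at this
  simpa only [Function.comp_def, Prod.map_apply, hodd] using this

/-- Shifting `μⱼ` by `-xⱼ` translates `(L₁, L₂)` by `-(x₁ + x₂, r)` and `(L₁, -L₂)` by
`-(x₁ + x₂, -r)`, where `r = x₁ + α x₂`. -/
lemma conv_dirac_neg [SFinite μ₁] [SFinite μ₂] (hα : Measurable α) (h : HeydeSymmetric α μ₁ μ₂)
    {x₁ x₂ : Y} (hr : 2 • (x₁ + α x₂) = 0) :
    HeydeSymmetric α (μ₁ ∗ Measure.dirac (-x₁)) (μ₂ ∗ Measure.dirac (-x₂)) := by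
  generalize hr_def : x₁ + α x₂ = r at hr
  have hr' : -r = r := neg_eq_of_add_eq_zero_right (by rwa [← two_nsmul])
  let T : Y × Y → Y × Y := fun q => (q.1 - (x₁ + x₂), q.2 - r)
  have hT : Measurable T := by fun_prop
  unfold HeydeSymmetric at h ⊢
  rw [Measure.conv_dirac, Measure.conv_dirac,
    Measure.map_prod_map _ _ (measurable_add_const _) (measurable_add_const _),
    Measure.map_map (by fun_prop) (by fun_prop), Measure.map_map (by fun_prop) (by fun_prop)]
  have hL : (fun p : Y × Y => (p.1 + p.2, p.1 + α p.2)) ∘ Prod.map (· + -x₁) (· + -x₂) =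
      T ∘ fun p => (p.1 + p.2, p.1 + α p.2) := by
    ext p <;>
      simp only [Function.comp_apply, Prod.map_fst, Prod.map_snd, map_add, map_neg, T, ← hr_def]
        <;> abel
  have hL' : (fun p : Y × Y => (p.1 + p.2, -(p.1 + α p.2))) ∘ Prod.map (· + -x₁) (· + -x₂) =
      T ∘ fun p => (p.1 + p.2, -(p.1 + α p.2)) := by
    ext p <;> simp only [Function.comp_apply, Prod.map_fst, Prod.map_snd, map_add, map_neg, T]
    · abel
    · rw [← hr', ← hr_def]
      abel
  rw [hL, hL', ← Measure.map_map hT (by fun_prop), ← Measure.map_map hT (by fun_prop), h]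

end HeydeSymmetric

instance : BorelSpace (Additive Circle) := ⟨rfl⟩
instance : SecondCountableTopology (Additive Circle) :=
  inferInstanceAs (SecondCountableTopology Circle)

lemma two_nsmul_eq_zero_iff_toMul (w : Additive Circle) :
    2 • w = 0 ↔ w.toMul = 1 ∨ w.toMul = negOneCircle := by
  rw [two_nsmul, ← toMul_eq_one, toMul_add, ← Circle.coe_inj, Circle.coe_mul, Circle.coe_one,
    mul_self_eq_one_iff, ← Circle.coe_one, Circle.coe_inj, ← Circle.coe_inj (y := negOneCircle)]
  rfl

lemma measurableSet_two_nsmul_eq_zero : MeasurableSet {w : Additive Circle | 2 • w = 0} :=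
  (isClosed_eq (continuous_id.nsmul 2) continuous_const).measurableSet

noncomputable def alphaHom (a b : ℝ) : XT →+ XT where
  toFun := alphaXT a b
  map_zero' := by simp [alphaXT]
  map_add' x y := by
    ext : 1
    · simp [alphaXT, mul_add]
    · simp only [alphaXT, Prod.snd_add, Prod.fst_add, mul_add, Circle.exp_add, ofMul_mul]
      abel

lemma alphaHom_apply (a b : ℝ) (x : XT) :
    alphaHom a b x = (a * x.1, Circle.expHom (b * x.1) + x.2) := rfl

@[fun_prop]
lemma measurable_alphaHom (a b : ℝ) : Measurable (alphaHom a b) := by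
  refine Continuous.measurable (Continuous.prodMk (by fun_prop) ?_)
  exact (continuous_ofMul.comp (Circle.exp.continuous.comp (by fun_prop))).add continuous_snd

noncomputable def betaHom (a b : ℝ) : XT →+ Additive Circle where
  toFun x := x.2 - Circle.expHom (b * x.1 / (a - 1))
  map_zero' := by simp
  map_add' x y := by
    simp only [Prod.fst_add, Prod.snd_add, mul_add, add_div, map_add]
    abel

lemma betaHom_apply (a b : ℝ) (x : XT) :
    betaHom a b x = x.2 - Circle.expHom (b * x.1 / (a - 1)) := rfl

@[fun_prop]
lemma measurable_betaHom (a b : ℝ) : Measurable (betaHom a b) := by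
  refine Continuous.measurable (continuous_snd.sub ?_)
  exact continuous_ofMul.comp (Circle.exp.continuous.comp (by fun_prop))

lemma betaHom_alphaHom {a : ℝ} (ha : a ≠ 1) (b : ℝ) (x : XT) :
    betaHom a b (alphaHom a b x) = betaHom a b x := by
  have hexp : b * (a * x.1) / (a - 1) = b * x.1 + b * x.1 / (a - 1) := by
    field_simp [sub_ne_zero.2 ha]
    ring
  simp only [betaHom_apply, alphaHom, alphaXT, AddMonoidHom.coe_mk, ZeroHom.coe_mk, hexp,
    map_add, Circle.expHom_apply, Function.comp_apply]
  abel

lemma mem_setK_iff (a b : ℝ) (x : XT) : x ∈ setK a b ↔ 2 • betaHom a b x = 0 := by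
  rw [two_nsmul_eq_zero_iff_toMul, betaHom_apply, toMul_sub, Circle.expHom_apply,
    Function.comp_apply, toMul_ofMul, div_eq_one, div_eq_iff_eq_mul]
  rfl

lemma measurableSet_setK (a b : ℝ) : MeasurableSet (setK a b) := by
  rw [show setK a b = betaHom a b ⁻¹' {w | 2 • w = 0} from Set.ext (mem_setK_iff a b)]
  exact measurable_betaHom a b measurableSet_two_nsmul_eq_zero

lemma mem_setG_iff (x : XT) : x ∈ setG ↔ x.1 = 0 ∧ 2 • x.2 = 0 := by
  rw [two_nsmul_eq_zero_iff_toMul]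
  rfl

lemma measurableSet_setG : MeasurableSet setG := by
  rw [show setG = Prod.fst ⁻¹' {0} ∩ Prod.snd ⁻¹' {w | 2 • w = 0} from Set.ext mem_setG_iff]
  exact (measurable_fst (measurableSet_singleton 0)).inter
    (measurable_snd measurableSet_two_nsmul_eq_zero)

section Shifts

variable {μ₁ μ₂ : Measure XT} [IsProbabilityMeasure μ₁] [IsProbabilityMeasure μ₂]

lemma exists_shift_ae_mem_setK {a : ℝ} (ha : a ≠ 1) {b : ℝ}
    (h : HeydeSymmetric (alphaHom a b) μ₁ μ₂) :
    ∃ x₁ x₂ : XT, x₁ + alphaHom a b x₂ = 0 ∧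
      (∀ᵐ x ∂μ₁, x - x₁ ∈ setK a b) ∧ ∀ᵐ x ∂μ₂, x - x₂ ∈ setK a b := by
  have hβ := measurable_betaHom a b
  have hβL : ∀ᵐ p ∂μ₁.prod μ₂,
      betaHom a b p.1 + betaHom a b p.2 ∈ AddSubgroup.torsionBy (Additive Circle) 2 := by
    have hL₂ : ∀ p : XT × XT,
        betaHom a b (p.1 + alphaHom a b p.2) = betaHom a b (p.1 + p.2) + 0 := fun p => by
      rw [add_zero, map_add, map_add, betaHom_alphaHom ha]
    filter_upwards [ae_two_nsmul_eq_zero_of_map_eq (by fun_prop) (by fun_prop) 0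
      (ae_of_all _ hL₂) (h.map_of_odd (measurable_alphaHom a b) hβ (map_neg _))] with p hp
    rwa [AddSubgroup.mem_torsionBy_two_iff, ← map_add, ← add_zero (betaHom a b (p.1 + p.2)),
      ← hL₂]
  obtain ⟨d, h₁, h₂⟩ := exists_ae_sub_mem_and_ae_add_mem _ hβL
  have hβd : ∀ (x : XT) (z : Additive Circle), betaHom a b (x - (0, z)) = betaHom a b x - z :=
    fun x z => by simp [betaHom_apply, sub_right_comm]
  refine ⟨(0, d), (0, -d), by simp [alphaHom_apply], ?_, ?_⟩
  · filter_upwards [h₁] with x hx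
    rwa [mem_setK_iff, hβd, ← AddSubgroup.mem_torsionBy_two_iff]
  · filter_upwards [h₂] with x hx
    rwa [mem_setK_iff, hβd, sub_neg_eq_add, add_comm, ← AddSubgroup.mem_torsionBy_two_iff]

lemma exists_ae_fst_eq (b : ℝ) (h : HeydeSymmetric (alphaHom 1 b) μ₁ μ₂) :
    ∃ c : ℝ, (∀ᵐ x ∂μ₁, x.1 = c) ∧ ∀ᵐ y ∂μ₂, y.1 = -c := by
  have hL₂ : ∀ p : XT × XT, (p.1 + alphaHom 1 b p.2).1 = (p.1 + p.2).1 + 0 := fun p => by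
    simp [alphaHom_apply]
  have hL : ∀ᵐ p ∂μ₁.prod μ₂, p.1.1 + p.2.1 ∈ (⊥ : AddSubgroup ℝ) := by
    filter_upwards [ae_two_nsmul_eq_zero_of_map_eq (by fun_prop) (by fun_prop) 0
      (ae_of_all _ hL₂) (h.map_of_odd (measurable_alphaHom 1 b) measurable_fst Prod.fst_neg)]
      with p hp
    simp only [AddSubgroup.mem_bot]
    simp [alphaHom_apply] at hp
    linarith
  obtain ⟨c, h₁, h₂⟩ := exists_ae_sub_mem_and_ae_add_mem _ hL
  refine ⟨c, ?_, ?_⟩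
  · filter_upwards [h₁] with x hx
    simpa [sub_eq_zero] using hx
  · filter_upwards [h₂] with y hy
    simpa [eq_neg_iff_add_eq_zero, add_comm] using hy

lemma exists_ae_two_nsmul_snd_eq_zero (b : ℝ) (h : HeydeSymmetric (alphaHom 1 b) μ₁ μ₂) {c : ℝ}
    (hc : ∀ᵐ y ∂μ₂, y.1 = c) :
    ∃ e, (∀ᵐ x ∂μ₁, 2 • (x.2 + Circle.expHom (b * c) - e) = 0) ∧
      ∀ᵐ y ∂μ₂, 2 • (e + y.2) = 0 := by
  have hL₂ : ∀ᵐ p ∂μ₁.prod μ₂,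
      (p.1 + alphaHom 1 b p.2).2 = (p.1 + p.2).2 + Circle.expHom (b * c) := by
    filter_upwards [Measure.quasiMeasurePreserving_snd.ae hc] with p hp
    simp only [alphaHom_apply, Prod.snd_add, hp]
    abel
  have hL : ∀ᵐ p ∂μ₁.prod μ₂,
      (p.1.2 + Circle.expHom (b * c)) + p.2.2 ∈ AddSubgroup.torsionBy (Additive Circle) 2 := by
    filter_upwards [hL₂, ae_two_nsmul_eq_zero_of_map_eq (by fun_prop)
      (measurable_snd.comp (by fun_prop)) _ hL₂
      (h.map_of_odd (measurable_alphaHom 1 b) measurable_snd Prod.snd_neg)] with p hp hp'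
    rwa [AddSubgroup.mem_torsionBy_two_iff, add_right_comm, ← Prod.snd_add, ← hp]
  obtain ⟨e, h₁, h₂⟩ := exists_ae_sub_mem_and_ae_add_mem
    (f₁ := fun x : XT => x.2 + Circle.expHom (b * c)) (f₂ := Prod.snd) _ hL
  simp only [AddSubgroup.mem_torsionBy_two_iff] at h₁ h₂
  exact ⟨e, h₁, h₂⟩

lemma exists_shift_ae_mem_setG (b : ℝ) (h : HeydeSymmetric (alphaHom 1 b) μ₁ μ₂) :
    ∃ x₁ x₂ : XT, x₁ + alphaHom 1 b x₂ = 0 ∧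
      (∀ᵐ x ∂μ₁, x - x₁ ∈ setG) ∧ ∀ᵐ x ∂μ₂, x - x₂ ∈ setG := by
  obtain ⟨c, hc₁, hc₂⟩ := exists_ae_fst_eq b h
  obtain ⟨e, he₁, he₂⟩ := exists_ae_two_nsmul_snd_eq_zero b h hc₂
  refine ⟨(c, e - Circle.expHom (b * -c)), (-c, -e), by simp [alphaHom_apply], ?_, ?_⟩
  · filter_upwards [hc₁, he₁] with x hx₁ hx₂
    rw [mem_setG_iff]
    refine ⟨by simp [hx₁], ?_⟩
    rwa [Prod.snd_sub, sub_sub_eq_add_sub]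
  · filter_upwards [hc₂, he₂] with x hx₁ hx₂
    rw [mem_setG_iff]
    refine ⟨by simp [hx₁], ?_⟩
    rwa [Prod.snd_sub, sub_neg_eq_add, add_comm]

end Shifts

theorem heyde_R_T_shift_lemma_general (a b : ℝ)
    (μ₁ μ₂ : Measure XT) [IsProbabilityMeasure μ₁] [IsProbabilityMeasure μ₂]
    (hsym :
      Measure.map (fun p : XT × XT => (p.1 + p.2, p.1 + alphaXT a b p.2)) (μ₁.prod μ₂) =
      Measure.map (fun p : XT × XT => (p.1 + p.2, -(p.1 + alphaXT a b p.2))) (μ₁.prod μ₂)) :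
    ∃ x₁ x₂ : XT,
      (a ≠ 1 →
        Measure.conv μ₁ (Measure.dirac (-x₁)) (setK a b) = 1 ∧
        Measure.conv μ₂ (Measure.dirac (-x₂)) (setK a b) = 1) ∧
      (a = 1 →
        Measure.conv μ₁ (Measure.dirac (-x₁)) setG = 1 ∧
        Measure.conv μ₂ (Measure.dirac (-x₂)) setG = 1) ∧
      (Measure.map (fun p : XT × XT => (p.1 + p.2, p.1 + alphaXT a b p.2))
          ((Measure.conv μ₁ (Measure.dirac (-x₁))).prod
            (Measure.conv μ₂ (Measure.dirac (-x₂)))) =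
        Measure.map (fun p : XT × XT => (p.1 + p.2, -(p.1 + alphaXT a b p.2)))
          ((Measure.conv μ₁ (Measure.dirac (-x₁))).prod
            (Measure.conv μ₂ (Measure.dirac (-x₂))))) := by
  have h : HeydeSymmetric (alphaHom a b) μ₁ μ₂ := hsym
  have hshift : ∀ {x₁ x₂ : XT}, x₁ + alphaHom a b x₂ = 0 →
      HeydeSymmetric (alphaHom a b) (μ₁ ∗ Measure.dirac (-x₁)) (μ₂ ∗ Measure.dirac (-x₂)) :=
    fun hr => h.conv_dirac_neg (measurable_alphaHom a b) (by rw [hr, smul_zero])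
  by_cases ha : a = 1
  · subst ha
    obtain ⟨x₁, x₂, hr, h₁, h₂⟩ := exists_shift_ae_mem_setG b h
    exact ⟨x₁, x₂, fun h => absurd rfl h,
      fun _ => ⟨conv_dirac_neg_apply_eq_one measurableSet_setG h₁,
        conv_dirac_neg_apply_eq_one measurableSet_setG h₂⟩, hshift hr⟩
  · obtain ⟨x₁, x₂, hr, h₁, h₂⟩ := exists_shift_ae_mem_setK ha h
    exact ⟨x₁, x₂, fun _ => ⟨conv_dirac_neg_apply_eq_one (measurableSet_setK a b) h₁,
      conv_dirac_neg_apply_eq_one (measurableSet_setK a b) h₂⟩, fun h => absurd h ha, hshift hr⟩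

/-- Lemma 3.1: under the symmetry condition on `ℝ × 𝕋` with
`α(t,z) = (a·t, e^{i·b·t}·z)`, suitable shifts `λⱼ = μⱼ ∗ δ_{−xⱼ}` are concentrated on
`K = {(t, ±e^{i·b·t/(a−1)})}` (if `a ≠ 1`), resp. on `G` (if `a = 1`), and the shifted
measures again satisfy the symmetry condition. -/
theorem heyde_R_T_shift_lemma (a b : ℝ) (ha : a ≠ 0)
    (μ₁ μ₂ : Measure XT) [IsProbabilityMeasure μ₁] [IsProbabilityMeasure μ₂]
    (hsym :
      Measure.map (fun p : XT × XT => (p.1 + p.2, p.1 + alphaXT a b p.2)) (μ₁.prod μ₂) =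
      Measure.map (fun p : XT × XT => (p.1 + p.2, -(p.1 + alphaXT a b p.2))) (μ₁.prod μ₂)) :
    ∃ x₁ x₂ : XT,
      (a ≠ 1 →
        Measure.conv μ₁ (Measure.dirac (-x₁)) (setK a b) = 1 ∧
        Measure.conv μ₂ (Measure.dirac (-x₂)) (setK a b) = 1) ∧
      (a = 1 →
        Measure.conv μ₁ (Measure.dirac (-x₁)) setG = 1 ∧
        Measure.conv μ₂ (Measure.dirac (-x₂)) setG = 1) ∧
      (Measure.map (fun p : XT × XT => (p.1 + p.2, p.1 + alphaXT a b p.2))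
          ((Measure.conv μ₁ (Measure.dirac (-x₁))).prod
            (Measure.conv μ₂ (Measure.dirac (-x₂)))) =
        Measure.map (fun p : XT × XT => (p.1 + p.2, -(p.1 + alphaXT a b p.2)))
          ((Measure.conv μ₁ (Measure.dirac (-x₁))).prod
            (Measure.conv μ₂ (Measure.dirac (-x₂))))) :=
  heyde_R_T_shift_lemma_general a b μ₁ μ₂ hsym
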